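/- Let p₁, p₂, p₃, p₄ be four distinct points in ℝ² no three of which are collinear, and suppose the open segments (p₁,p₃) and (p₂,p₄) intersect (the two 'diagonals' cross). Let v₁, v₂, v₃, v₄ ∈ ℝ² be velocity vectors such that ⟪pᵢ − pⱼ, vᵢ − vⱼ⟫ ≥ 0 for all 1 ≤ i < j ≤ 4, and such that ⟪p₁ − p₃, v₁ − v₃⟫ = 0 and ⟪p₂ − p₄, v₂ − v₄⟫ = 0. Then ⟪pᵢ − pⱼ, vᵢ − vⱼ⟫ = 0 for all 1 ≤ i < j ≤ 4. -/
import Mathlib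


open scoped RealInnerProductSpace

/-- Four points in general position whose diagonals cross:
an expansive motion that is tight on both diagonals is tight on all six pairs.
Here `p 0, p 1, p 2, p 3` play the roles of `p₁, p₂, p₃, p₄`, so the open
diagonals are `(p 0, p 2)` and `(p 1, p 3)`. -/
theorem crossing_diagonals_tight_implies_all_tight
    (p : Fin 4 → EuclideanSpace ℝ (Fin 2))
    (hinj : Function.Injective p)
    (hgp : ∀ i j k : Fin 4, i ≠ j → j ≠ k → i ≠ k →
      ¬ Collinear ℝ ({p i, p j, p k} : Set (EuclideanSpace ℝ (Fin 2))))
    (hcross : (openSegment ℝ (p 0) (p 2) ∩ openSegment ℝ (p 1) (p 3)).Nonempty)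
    (v : Fin 4 → EuclideanSpace ℝ (Fin 2))
    (hexp : ∀ i j : Fin 4, 0 ≤ ⟪p i - p j, v i - v j⟫)
    (h02 : ⟪p 0 - p 2, v 0 - v 2⟫ = 0)
    (h13 : ⟪p 1 - p 3, v 1 - v 3⟫ = 0) :
    ∀ i j : Fin 4, ⟪p i - p j, v i - v j⟫ = 0 := by
  obtain ⟨q, hq1, hq2⟩ := hcross
  rw [openSegment, Set.mem_setOf_eq] at hq1 hq2
  obtain ⟨a, c, ha, hc, hac, hqa⟩ := hq1
  obtain ⟨b, d, hb, hd, hbd, hqb⟩ := hq2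
  have hp : a • p 0 + c • p 2 = b • p 1 + d • p 3 := hqa.trans hqb.symm
  have E : ∀ β : Fin 4, a * ⟪p 0, v β⟫ + c * ⟪p 2, v β⟫
      = b * ⟪p 1, v β⟫ + d * ⟪p 3, v β⟫ := by
    intro β
    have h := congrArg (fun z : EuclideanSpace ℝ (Fin 2) => ⟪z, v β⟫) hp
    simp only [inner_add_left, real_inner_smul_left] at h
    exact h
  have key : a*b*⟪p 0 - p 1, v 0 - v 1⟫ + b*c*⟪p 1 - p 2, v 1 - v 2⟫
      + c*d*⟪p 2 - p 3, v 2 - v 3⟫ + a*d*⟪p 0 - p 3, v 0 - v 3⟫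
      = a*c*⟪p 0 - p 2, v 0 - v 2⟫ + b*d*⟪p 1 - p 3, v 1 - v 3⟫ := by
    have E0 := E 0; have E1 := E 1; have E2 := E 2; have E3 := E 3
    simp only [inner_sub_left, inner_sub_right]
    linear_combination a * E0 - b * E1 + c * E2 - d * E3
      - (a * ⟪p 0, v 0⟫ - b * ⟪p 1, v 1⟫ + c * ⟪p 2, v 2⟫ - d * ⟪p 3, v 3⟫) * (hac - hbd)
  have hsum : a*b*⟪p 0 - p 1, v 0 - v 1⟫ + b*c*⟪p 1 - p 2, v 1 - v 2⟫
      + c*d*⟪p 2 - p 3, v 2 - v 3⟫ + a*d*⟪p 0 - p 3, v 0 - v 3⟫ = 0 := by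
    rw [key, h02, h13]; ring
  have hab := mul_pos ha hb
  have hbc := mul_pos hb hc
  have hcd := mul_pos hc hd
  have had := mul_pos ha hd
  have m01 := mul_nonneg hab.le (hexp 0 1)
  have m12 := mul_nonneg hbc.le (hexp 1 2)
  have m23 := mul_nonneg hcd.le (hexp 2 3)
  have m03 := mul_nonneg had.le (hexp 0 3)
  have t01 : ⟪p 0 - p 1, v 0 - v 1⟫ = 0 :=
    (mul_eq_zero.mp (le_antisymm (by linarith) m01)).resolve_left hab.ne'
  have t12 : ⟪p 1 - p 2, v 1 - v 2⟫ = 0 :=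
    (mul_eq_zero.mp (le_antisymm (by linarith) m12)).resolve_left hbc.ne'
  have t23 : ⟪p 2 - p 3, v 2 - v 3⟫ = 0 :=
    (mul_eq_zero.mp (le_antisymm (by linarith) m23)).resolve_left hcd.ne'
  have t03 : ⟪p 0 - p 3, v 0 - v 3⟫ = 0 :=
    (mul_eq_zero.mp (le_antisymm (by linarith) m03)).resolve_left had.ne'
  have symm : ∀ i j : Fin 4, ⟪p i - p j, v i - v j⟫ = ⟪p j - p i, v j - v i⟫ := fun i j => by
    rw [← neg_sub (p j), ← neg_sub (v j), inner_neg_neg]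
  intro i j
  fin_cases i <;> fin_cases j <;>
    first
      | exact h02 | exact h13 | exact t01 | exact t12 | exact t23 | exact t03
      | (rw [symm]
         first | exact h02 | exact h13 | exact t01 | exact t12 | exact t23 | exact t03)
      | simp
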